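/- arXiv:1908.03827 — 2 statements merged into one kernel-verified Lean document; each statement's English description precedes it below -/
import Mathlib

section
/- For any fixed initial state ξ ∈ 𝔹_T^N, the fixation probability ρ_A(ξ), viewed as a function of the selection intensity δ, is differentiable at δ = 0 with value ρ_A(ξ)|_{δ=0} = ξ̂ and derivative (d/dδ)|_{δ=0} ρ_A(ξ) = ⟨ (d/dδ)|_{δ=0} Δ̂_sel ⟩°_ξ; equivalently, ρ_A(ξ) = ξ̂ + δ⟨(d/dδ)|_{δ=0} Δ̂_sel⟩°_ξ + O(δ²) as δ → 0⁺. -/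
open Finset Filter Asymptotics Topology

namespace Evo

/-- A population state: each of the `N` individuals has type `A` (`true`) or `B` (`false`). -/
abbrev St (N : ℕ) := Fin N → Bool

/-- A replacement event `(R, α)`: the set `R` of replaced individuals together with a
parentage map (only the values on `R` are relevant). -/
abbrev Event (N : ℕ) := Finset (Fin N) × (Fin N → Fin N)

/-- The extended parentage map `α̃`, equal to `α` on `R` and the identity off `R`. -/
def extMap {N : ℕ} (e : Event N) (i : Fin N) : Fin N := if i ∈ e.1 then e.2 i else i

/-- The state update induced by a replacement event: `x ↦ x_α̃`. -/
def upd {N : ℕ} (e : Event N) (x : St N) : St N := fun i => x (extMap e i)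

/-- Boolean values as reals. -/
def bv (b : Bool) : ℝ := if b then 1 else 0

/-- The all-`A` state. -/
def stA (N : ℕ) : St N := fun _ => true

/-- The all-`B` state. -/
def stB (N : ℕ) : St N := fun _ => false

/-- Transient (non-monoallelic) states, i.e. members of `𝔹_T^N`. -/
def Transient {N : ℕ} (x : St N) : Prop := x ≠ stA N ∧ x ≠ stB N

/-- A replacement rule: for each state, a probability distribution over replacement events. -/
def IsRule {N : ℕ} (p : St N → Event N → ℝ) : Prop :=
  (∀ x e, 0 ≤ p x e) ∧ ∀ x, ∑ e : Event N, p x e = 1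

/-- A state-independent distribution over replacement events (a neutral replacement rule). -/
def IsDist {N : ℕ} (p0 : Event N → ℝ) : Prop :=
  (∀ e, 0 ≤ p0 e) ∧ ∑ e : Event N, p0 e = 1

/-- Transition matrix of the Markov chain induced by a replacement rule. -/
def tmat {N : ℕ} (p : St N → Event N → ℝ) : Matrix (St N) (St N) ℝ :=
  Matrix.of fun x y => ∑ e : Event N, if upd e x = y then p x e else 0

/-- The Fixation Axiom. -/
def FixAxiom {N : ℕ} (p : St N → Event N → ℝ) : Prop :=
  ∃ (i : Fin N) (m : ℕ) (ev : Fin m → Event N), 1 ≤ m ∧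
    (∀ k x, 0 < p x (ev k)) ∧ (∃ k, i ∈ (ev k).1) ∧
    (∀ j, (List.ofFn fun k => extMap (ev k)).foldr (· ∘ ·) id j = i)

/-- The sojourn time `t_ξ(x)`: expected number of visits to `x` prior to absorption,
starting from `ξ` (expressed as `Σ_t (P^t)(ξ, x)`). -/
noncomputable def sojourn {N : ℕ} (p : St N → Event N → ℝ) (ξ x : St N) : ℝ :=
  ∑' t : ℕ, (tmat p ^ t) ξ x

/-- The operator `⟨φ⟩_ξ = Σ_{t=0}^∞ E[φ(x^t) | x⁰ = ξ]` for the chain with rule `p`. -/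
noncomputable def sgen {N : ℕ} (p : St N → Event N → ℝ) (ξ : St N) (φ : St N → ℝ) : ℝ :=
  ∑' t : ℕ, ∑ x : St N, (tmat p ^ t) ξ x * φ x

/-- The marginal probability `e_ij` that `i` transmits its offspring to `j`,
for a distribution `q` over replacement events. -/
def emarg {N : ℕ} (q : Event N → ℝ) (i j : Fin N) : ℝ :=
  ∑ e : Event N, if j ∈ e.1 ∧ e.2 j = i then q e else 0

/-- `π` is the vector of reproductive values for the neutral rule `p°`:
`Σ_j e°_ij π_j = Σ_j e°_ji π_i` for all `i`, and `Σ_i π_i = 1`. -/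
def IsRV {N : ℕ} (p0 : Event N → ℝ) (π : Fin N → ℝ) : Prop :=
  (∀ i, ∑ j, emarg p0 i j * π j = ∑ j, emarg p0 j i * π i) ∧ (∑ i, π i = 1)

/-- The reproductive-value-weighted frequency `x̂ = Σ_i π_i x_i`. -/
def hatx {N : ℕ} (π : Fin N → ℝ) (x : St N) : ℝ := ∑ i, π i * bv (x i)

/-- The multilinear monomial `x_I = Π_{i ∈ I} x_i`. -/
def prodI {N : ℕ} (x : St N) (I : Finset (Fin N)) : ℝ := ∏ i ∈ I, bv (x i)

/-- The first-order (in `δ`) effect of selection on the RV-weighted frequency: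
`(d/dδ)|₀ Δ̂_sel(x) = Σ_i π_i Σ_j (x_j − x_i) (d/dδ)|₀ e_ji(x)`. -/
noncomputable def dsel' {N : ℕ} (π : Fin N → ℝ) (p : ℝ → St N → Event N → ℝ) (x : St N) : ℝ :=
  ∑ i, π i * ∑ j, (bv (x j) - bv (x i)) * deriv (fun d => emarg (p d x) j i) 0

section HelperSection
section Helpers
variable {N : ℕ}

instance : DecidablePred (Transient (N := N)) := fun _ => instDecidableAnd

/-- Transient states as a subtype. -/
abbrev TS (N : ℕ) := {x : St N // Transient x}

lemma tmat_transfer (p : St N → Event N → ℝ) (x : St N) (f : St N → ℝ) :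
    ∑ y : St N, tmat p x y * f y = ∑ e : Event N, p x e * f (upd e x) := by
  simp only [tmat, Matrix.of_apply, Finset.sum_mul, ite_mul, zero_mul]
  rw [Finset.sum_comm]
  refine Finset.sum_congr rfl fun e _ => ?_
  simp [Finset.sum_ite_eq]

lemma tmat_nonneg {p : St N → Event N → ℝ} (hp : IsRule p) (x y : St N) :
    0 ≤ tmat p x y := by
  refine Finset.sum_nonneg fun e _ => ?_
  split <;> simp [hp.1 x e]

lemma tmat_rowsum {p : St N → Event N → ℝ} (hp : IsRule p) (x : St N) :
    ∑ y : St N, tmat p x y = 1 := by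
  have := tmat_transfer p x (fun _ => 1)
  simpa [hp.2 x] using this

lemma tmat_const {p : St N → Event N → ℝ} (hp : IsRule p) (c : Bool) (y : St N) :
    tmat p (fun _ => c) y = if y = (fun _ => c) then 1 else 0 := by
  have : ∀ e : Event N, upd e (fun _ => c) = fun _ => c := fun e => rfl
  simp only [tmat, Matrix.of_apply, this]
  by_cases h : (fun _ => c) = y
  · simp [h.symm, h ▸ (hp.2 (fun _ => c)), ← h, hp.2]
  · simp [h, Ne.symm h]

lemma pow_rowsum {p : St N → Event N → ℝ} (hp : IsRule p) (t : ℕ) (x : St N) :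
    ∑ y : St N, (tmat p ^ t) x y = 1 := by
  induction t generalizing x with
  | zero => simp [Matrix.one_apply]
  | succ t ih =>
      rw [pow_succ']
      simp only [Matrix.mul_apply]
      rw [Finset.sum_comm]
      have : ∀ z : St N, ∑ y : St N, tmat p x z * (tmat p ^ t) z y
          = tmat p x z := by
        intro z; rw [← Finset.mul_sum, ih z, mul_one]
      simp only [this]
      exact tmat_rowsum hp x

lemma pow_nonneg {p : St N → Event N → ℝ} (hp : IsRule p) (t : ℕ) (x y : St N) :
    0 ≤ (tmat p ^ t) x y := by
  induction t generalizing x y with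
  | zero => simp [Matrix.one_apply]; split <;> norm_num
  | succ t ih =>
      rw [pow_succ, Matrix.mul_apply]
      exact Finset.sum_nonneg fun z _ => mul_nonneg (ih x z) (tmat_nonneg hp z y)

lemma pow_le_one {p : St N → Event N → ℝ} (hp : IsRule p) (t : ℕ) (x y : St N) :
    (tmat p ^ t) x y ≤ 1 := by
  calc (tmat p ^ t) x y ≤ ∑ z : St N, (tmat p ^ t) x z :=
        Finset.single_le_sum (fun z _ => pow_nonneg hp t x z) (Finset.mem_univ y)
    _ = 1 := pow_rowsum hp t x

lemma pow_const {p : St N → Event N → ℝ} (hp : IsRule p) (c : Bool) (t : ℕ) (y : St N) :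
    (tmat p ^ t) (fun _ => c) y = if y = (fun _ => c) then 1 else 0 := by
  induction t with
  | zero => simp [Matrix.one_apply, eq_comm]
  | succ t ih =>
      rw [pow_succ', Matrix.mul_apply]
      have : ∀ z : St N, tmat p (fun _ => c) z * (tmat p ^ t) z y
          = if z = (fun _ => c) then (if y = (fun _ => c) then 1 else 0) else 0 := by
        intro z
        rw [tmat_const hp]
        by_cases h : z = (fun _ => c) <;> simp [h, ih]
      simp only [this]
      simp

end Helpers
section Helpers2
variable {N : ℕ}

lemma not_transient_iff (z : St N) : ¬ Transient z ↔ z = stA N ∨ z = stB N := by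
  rw [Transient, not_and_or, not_not, not_not]

lemma sum_split (f : St N → ℝ) (hA : f (stA N) = 0) (hB : f (stB N) = 0) :
    ∑ z : St N, f z = ∑ z : TS N, f z.1 := by
  rw [← Finset.sum_filter_add_sum_filter_not Finset.univ Transient f]
  have h2 : ∑ z ∈ Finset.univ.filter (fun z => ¬ Transient z), f z = 0 := by
    refine Finset.sum_eq_zero fun z hz => ?_
    rcases (not_transient_iff z).1 (Finset.mem_filter.1 hz).2 with h | h <;> simp [h, hA, hB]
  rw [h2, add_zero]
  exact (Finset.sum_subtype _ (by simp) f)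

lemma stA_ne_stB (hN : 0 < N) : stA N ≠ stB N := by
  intro h
  have := congrFun h ⟨0, hN⟩
  simp [stA, stB] at this

lemma sum_split' (hN : 0 < N) (f : St N → ℝ) :
    ∑ z : St N, f z = (∑ z : TS N, f z.1) + f (stA N) + f (stB N) := by
  rw [← Finset.sum_filter_add_sum_filter_not Finset.univ Transient f]
  have h1 : Finset.univ.filter (fun z : St N => ¬ Transient z) = {stA N, stB N} := by
    ext z
    simp [not_transient_iff]
  rw [h1, Finset.sum_pair (stA_ne_stB hN),
    Finset.sum_subtype (p := Transient) _ (by simp) f, add_assoc]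

/-- restriction of the chain to transient states -/
def Qmat (p : St N → Event N → ℝ) : Matrix (TS N) (TS N) ℝ :=
  Matrix.of fun x y => tmat p x.1 y.1

def bvec (p : St N → Event N → ℝ) : TS N → ℝ := fun x => tmat p x.1 (stA N)

lemma pow_restrict {p : St N → Event N → ℝ} (hp : IsRule p) (t : ℕ) (x y : TS N) :
    (tmat p ^ t) x.1 y.1 = (Qmat p ^ t) x y := by
  induction t generalizing y with
  | zero =>
      simp only [pow_zero, Matrix.one_apply]
      by_cases h : x = y
      · simp [h]
      · simp [h, show ¬ x.1 = y.1 from fun hh => h (Subtype.ext hh)]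
  | succ t ih =>
      rw [pow_succ, pow_succ, Matrix.mul_apply, Matrix.mul_apply]
      rw [sum_split (fun z => (tmat p ^ t) x.1 z * tmat p z y.1)]
      · exact Finset.sum_congr rfl fun z _ => by rw [ih z]; rfl
      · have : tmat p (stA N) y.1 = 0 := by
          rw [show stA N = (fun _ => true) from rfl, tmat_const hp]
          simp [show ¬ y.1 = (fun _ => true) from y.2.1]
        simp [this]
      · have : tmat p (stB N) y.1 = 0 := by
          rw [show stB N = (fun _ => false) from rfl, tmat_const hp]
          simp [show ¬ y.1 = (fun _ => false) from y.2.2]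
        simp [this]

lemma Qpow_nonneg {p : St N → Event N → ℝ} (hp : IsRule p) (t : ℕ) (x y : TS N) :
    0 ≤ (Qmat p ^ t) x y := pow_restrict hp t x y ▸ pow_nonneg hp t x.1 y.1

end Helpers2

section Helpers3
variable {N : ℕ}

lemma tmat_ge {p : St N → Event N → ℝ} (hp : IsRule p) (x : St N) (e : Event N) :
    p x e ≤ tmat p x (upd e x) := by
  have : tmat p x (upd e x) = ∑ e' : Event N, if upd e' x = upd e x then p x e' else 0 := rfl
  rw [this]
  have h1 : (if upd e x = upd e x then p x e else 0) = p x e := by simp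
  calc p x e = (if upd e x = upd e x then p x e else 0) := h1.symm
    _ ≤ _ := Finset.single_le_sum (f := fun e' => if upd e' x = upd e x then p x e' else 0)
        (fun e' _ => by split <;> simp [hp.1]) (Finset.mem_univ e)

lemma pow_step_ge {p : St N → Event N → ℝ} (hp : IsRule p) (n : ℕ) (x y z : St N) :
    tmat p x y * (tmat p ^ n) y z ≤ (tmat p ^ (n+1)) x z := by
  rw [pow_succ', Matrix.mul_apply]
  exact Finset.single_le_sum
    (f := fun w => tmat p x w * (tmat p ^ n) w z)
    (fun w _ => mul_nonneg (tmat_nonneg hp x w) (pow_nonneg hp n w z)) (Finset.mem_univ y)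

lemma foldl_upd (l : List (Event N)) (x : St N) :
    l.foldl (fun s e => upd e s) x = fun j => x ((l.map extMap).foldr (· ∘ ·) id j) := by
  induction l generalizing x with
  | nil => rfl
  | cons e l ih =>
      simp only [List.foldl_cons, List.map_cons, List.foldr_cons]
      rw [ih (upd e x)]
      rfl

noncomputable def minp (p : St N → Event N → ℝ) (e : Event N) : ℝ :=
  Finset.univ.inf' (Finset.univ_nonempty (α := St N)) (fun s : St N => p s e)

lemma minp_le (p : St N → Event N → ℝ) (e : Event N) (x : St N) : minp p e ≤ p x e :=
  Finset.inf'_le _ (Finset.mem_univ x)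

lemma minp_nonneg {p : St N → Event N → ℝ} (hp : IsRule p) (e : Event N) :
    0 ≤ minp p e := by
  rw [minp, Finset.le_inf'_iff]
  exact fun x _ => hp.1 x e

lemma minp_pos {p : St N → Event N → ℝ} {e : Event N} (h : ∀ x, 0 < p x e) :
    0 < minp p e := by
  rw [minp, Finset.lt_inf'_iff]
  exact fun x _ => h x

lemma chain_lb {p : St N → Event N → ℝ} (hp : IsRule p) (l : List (Event N)) (x : St N) :
    (l.map (minp p)).prod ≤ (tmat p ^ l.length) x (l.foldl (fun s e => upd e s) x) := by
  induction l generalizing x with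
  | nil => simp
  | cons e l ih =>
      simp only [List.map_cons, List.prod_cons, List.foldl_cons, List.length_cons]
      calc minp p e * (l.map (minp p)).prod
          ≤ tmat p x (upd e x) * (tmat p ^ l.length) (upd e x)
              (l.foldl (fun s e => upd e s) (upd e x)) := by
            refine mul_le_mul ((minp_le p e x).trans (tmat_ge hp x e)) (ih (upd e x)) ?_
              (tmat_nonneg hp _ _)
            exact List.prod_nonneg (fun a ha => by
              obtain ⟨e', _, rfl⟩ := List.mem_map.1 ha
              exact minp_nonneg hp e')
        _ ≤ (tmat p ^ (l.length + 1)) x (l.foldl (fun s e => upd e s) (upd e x)) :=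
            pow_step_ge hp l.length x (upd e x) _

end Helpers3

section Helpers4
variable {N : ℕ}

lemma fix_bound {p : St N → Event N → ℝ} (hp : IsRule p) (hfx : FixAxiom p) :
    ∃ (m : ℕ) (c : ℝ), 1 ≤ m ∧ 0 < c ∧ c ≤ 1 ∧
      ∀ x : St N, ∑ y : TS N, (tmat p ^ m) x y.1 ≤ 1 - c := by
  obtain ⟨i, m, ev, hm, hpos, -, hcomp⟩ := hfx
  set l : List (Event N) := List.ofFn ev with hl
  set c : ℝ := (l.map (minp p)).prod with hc
  have hcpos : 0 < c := by
    refine List.prod_pos fun a ha => ?_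
    obtain ⟨e', he', rfl⟩ := List.mem_map.1 ha
    obtain ⟨k, rfl⟩ := Set.mem_range.1 ((List.mem_ofFn' _ _).1 he')
    exact minp_pos (fun x => hpos k x)
  have hfold : ∀ x : St N, l.foldl (fun s e => upd e s) x = fun _ => x i := by
    intro x
    rw [foldl_upd]
    funext j
    have : l.map extMap = List.ofFn fun k => extMap (ev k) := by
      rw [hl, List.map_ofFn]; rfl
    rw [this, hcomp j]
  have hlen : l.length = m := by simp [hl]
  have hkey : ∀ x : St N, c ≤ (tmat p ^ m) x (fun _ => x i) := by
    intro x
    have := chain_lb hp l x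
    rwa [hlen, hfold x] at this
  have hc1 : c ≤ 1 := (hkey (stA N)).trans (pow_le_one hp m _ _)
  refine ⟨m, c, hm, hcpos, hc1, fun x => ?_⟩
  have hnt : ¬ Transient (fun _ => x i : St N) := by
    rw [not_transient_iff]
    cases h : x i
    · right; funext j; simp [stB, h]
    · left; funext j; simp [stA, h]
  have hsplit := Finset.sum_filter_add_sum_filter_not Finset.univ Transient
      (fun y => (tmat p ^ m) x y)
  have h1 : ∑ y ∈ Finset.univ.filter Transient, (tmat p ^ m) x y
      = ∑ y : TS N, (tmat p ^ m) x y.1 :=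
    Finset.sum_subtype _ (by simp) _
  have h2 : c ≤ ∑ y ∈ Finset.univ.filter (fun y => ¬ Transient y), (tmat p ^ m) x y :=
    (hkey x).trans (Finset.single_le_sum (fun y _ => pow_nonneg hp m x y)
      (by simp [hnt]))
  have h3 : ∑ y ∈ Finset.univ.filter Transient, (tmat p ^ m) x y
      + ∑ y ∈ Finset.univ.filter (fun y => ¬ Transient y), (tmat p ^ m) x y = 1 := by
    rw [hsplit]; exact pow_rowsum hp m x
  linarith [h1 ▸ h3]

lemma trans_mass_le_one {p : St N → Event N → ℝ} (hp : IsRule p) (t : ℕ) (x : St N) :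
    ∑ y : TS N, (tmat p ^ t) x y.1 ≤ 1 := by
  have h1 : ∑ y ∈ Finset.univ.filter Transient, (tmat p ^ t) x y
      = ∑ y : TS N, (tmat p ^ t) x y.1 := Finset.sum_subtype _ (by simp) _
  rw [← h1]
  calc ∑ y ∈ Finset.univ.filter Transient, (tmat p ^ t) x y
      ≤ ∑ y : St N, (tmat p ^ t) x y :=
        Finset.sum_le_sum_of_subset_of_nonneg (Finset.filter_subset _ _)
          (fun y _ _ => pow_nonneg hp t x y)
    _ = 1 := pow_rowsum hp t x

lemma trans_decay {p : St N → Event N → ℝ} (hp : IsRule p) {m : ℕ} {c : ℝ}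
    (hm : 1 ≤ m) (hc : 0 < c) (hc1 : c ≤ 1)
    (hrow : ∀ x : St N, ∑ y : TS N, (tmat p ^ m) x y.1 ≤ 1 - c) :
    ∀ (t : ℕ) (x : St N), ∑ y : TS N, (tmat p ^ t) x y.1 ≤ (1-c)^(t/m) := by
  intro t
  induction t using Nat.strong_induction_on with
  | _ t ih =>
    intro x
    by_cases hlt : t < m
    · rw [Nat.div_eq_of_lt hlt, pow_zero]
      exact trans_mass_le_one hp t x
    · push_neg at hlt
      have hts : t = (t - m) + m := by omega
      have hsplit : ∀ y : TS N, (tmat p ^ t) x y.1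
          = ∑ z : St N, (tmat p ^ (t-m)) x z * (tmat p ^ m) z y.1 := by
        intro y
        conv_lhs => rw [hts]
        rw [pow_add, Matrix.mul_apply]
      calc ∑ y : TS N, (tmat p ^ t) x y.1
          = ∑ z : St N, (tmat p ^ (t-m)) x z * ∑ y : TS N, (tmat p ^ m) z y.1 := by
            simp only [hsplit]
            rw [Finset.sum_comm]
            exact Finset.sum_congr rfl fun z _ => by rw [Finset.mul_sum]
        _ = ∑ z : TS N, (tmat p ^ (t-m)) x z.1 * ∑ y : TS N, (tmat p ^ m) z.1 y.1 := by
            refine sum_split _ ?_ ?_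
            · have : ∀ y : TS N, (tmat p ^ m) (stA N) y.1 = 0 := fun y => by
                rw [show stA N = (fun _ => true) from rfl, pow_const hp]
                simp [show ¬ y.1 = (fun _ => true) from y.2.1]
              simp [this]
            · have : ∀ y : TS N, (tmat p ^ m) (stB N) y.1 = 0 := fun y => by
                rw [show stB N = (fun _ => false) from rfl, pow_const hp]
                simp [show ¬ y.1 = (fun _ => false) from y.2.2]
              simp [this]
        _ ≤ ∑ z : TS N, (tmat p ^ (t-m)) x z.1 * (1 - c) := by
            refine Finset.sum_le_sum fun z _ => ?_
            exact mul_le_mul_of_nonneg_left (hrow z.1) (pow_nonneg hp _ _ _)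
        _ = (1 - c) * ∑ z : TS N, (tmat p ^ (t-m)) x z.1 := by
            rw [← Finset.sum_mul, mul_comm]
        _ ≤ (1 - c) * (1-c)^((t-m)/m) := by
            refine mul_le_mul_of_nonneg_left ?_ (by linarith)
            exact ih (t - m) (by omega) x
        _ = (1-c)^(t/m) := by
            rw [← pow_succ']
            congr 1
            rw [Nat.div_eq_sub_div (by omega) hlt]

end Helpers4

section Helpers5

lemma summable_pow_div {β : ℝ} (hβ0 : 0 ≤ β) (hβ1 : β < 1) {m : ℕ} (hm : 1 ≤ m) :
    Summable (fun t : ℕ => β ^ (t / m)) := by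
  have hmain : ∀ K : ℕ, ∑ t ∈ Finset.range (K * m), β ^ (t / m) = (m : ℝ) * ∑ k ∈ Finset.range K, β ^ k := by
    intro K
    induction K with
    | zero => simp
    | succ K ih =>
        have : (K + 1) * m = K * m + m := by ring
        rw [this, Finset.sum_range_add, ih, Finset.sum_range_succ]
        have h2 : ∀ j ∈ Finset.range m, β ^ ((K * m + j) / m) = β ^ K := by
          intro j hj
          congr 1
          have hj' : j < m := Finset.mem_range.1 hj
          rw [Nat.mul_comm K m, Nat.mul_add_div (by omega), Nat.div_eq_of_lt hj']
          omega
        rw [Finset.sum_congr rfl h2]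
        simp only [Finset.sum_const, Finset.card_range, nsmul_eq_mul]
        ring
  refine summable_of_sum_range_le (c := (m : ℝ) * (1 - β)⁻¹) (fun t => _root_.pow_nonneg hβ0 _) ?_
  intro n
  have hsub : Finset.range n ⊆ Finset.range ((n / m + 1) * m) := by
    apply Finset.range_subset_range.2
    have h1 := Nat.div_add_mod n m
    have h2 : n % m < m := Nat.mod_lt _ (by omega)
    refine le_of_lt ?_
    calc n = m * (n / m) + n % m := h1.symm
      _ < m * (n / m) + m := by omega
      _ = (n / m + 1) * m := by ring
  calc ∑ t ∈ Finset.range n, β ^ (t / m)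
      ≤ ∑ t ∈ Finset.range ((n / m + 1) * m), β ^ (t / m) :=
        Finset.sum_le_sum_of_subset_of_nonneg hsub (fun t _ _ => _root_.pow_nonneg hβ0 _)
    _ = (m : ℝ) * ∑ k ∈ Finset.range (n / m + 1), β ^ k := hmain _
    _ ≤ (m : ℝ) * (1 - β)⁻¹ := by
        refine mul_le_mul_of_nonneg_left ?_ (by positivity)
        have hβne : β ≠ 1 := by linarith
        rw [geom_sum_eq hβne]
        have hb : 0 < 1 - β := by linarith
        have h0 : 0 ≤ β ^ (n / m + 1) := _root_.pow_nonneg hβ0 _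
        have heq : (β ^ (n / m + 1) - 1) / (β - 1) = (1 - β ^ (n / m + 1)) / (1 - β) := by
          rw [div_eq_div_iff (by linarith) (by linarith)]; ring
        rw [heq, div_le_iff₀ hb, inv_mul_cancel₀ (by linarith)]
        linarith

end Helpers5

section Helpers6
open Matrix
variable {N : ℕ}

lemma exists_decay {p : St N → Event N → ℝ} (hp : IsRule p) (hfx : FixAxiom p) :
    ∃ g : ℕ → ℝ, Summable g ∧ (∀ t, 0 ≤ g t) ∧ Tendsto g atTop (𝓝 0) ∧
      ∀ (t : ℕ) (x y : TS N), (Qmat p ^ t) x y ≤ g t := by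
  obtain ⟨m, c, hm, hc, hc1, hrow⟩ := fix_bound hp hfx
  refine ⟨fun t => (1-c)^(t/m), summable_pow_div (by linarith) (by linarith) hm,
    fun t => _root_.pow_nonneg (by linarith) _,
    (summable_pow_div (by linarith) (by linarith) hm).tendsto_atTop_zero, ?_⟩
  intro t x y
  calc (Qmat p ^ t) x y = (tmat p ^ t) x.1 y.1 := (pow_restrict hp t x y).symm
    _ ≤ ∑ y' : TS N, (tmat p ^ t) x.1 y'.1 :=
        Finset.single_le_sum (fun y' _ => pow_nonneg hp t x.1 y'.1) (Finset.mem_univ y)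
    _ ≤ (1-c)^(t/m) := trans_decay hp hm hc hc1 hrow t x.1

lemma vec_bound {p : St N → Event N → ℝ} (hp : IsRule p) {g : ℕ → ℝ}
    (hg : ∀ (t : ℕ) (x y : TS N), (Qmat p ^ t) x y ≤ g t)
    (d : TS N → ℝ) (t : ℕ) (x : TS N) :
    |((Qmat p ^ t) *ᵥ d) x| ≤ g t * ∑ y : TS N, |d y| := by
  have h0 : ((Qmat p ^ t) *ᵥ d) x = ∑ y : TS N, (Qmat p ^ t) x y * d y := by
    simp [Matrix.mulVec, dotProduct]
  rw [h0]
  calc |∑ y : TS N, (Qmat p ^ t) x y * d y| ≤ ∑ y : TS N, |(Qmat p ^ t) x y * d y| :=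
        Finset.abs_sum_le_sum_abs _ _
    _ ≤ ∑ y : TS N, g t * |d y| := by
        refine Finset.sum_le_sum fun y _ => ?_
        rw [abs_mul, abs_of_nonneg (Qpow_nonneg hp t x y)]
        exact mul_le_mul_of_nonneg_right (hg t x y) (abs_nonneg _)
    _ = g t * ∑ y : TS N, |d y| := by rw [Finset.mul_sum]

lemma partial_sums_eq {p : St N → Event N → ℝ} {w d : TS N → ℝ}
    (hw : (1 - Qmat p) *ᵥ w = d) (n : ℕ) :
    ∑ t ∈ Finset.range n, (Qmat p ^ t) *ᵥ d = w - (Qmat p ^ n) *ᵥ w := by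
  have hQw : Qmat p *ᵥ w = w - d := by
    rw [Matrix.sub_mulVec, Matrix.one_mulVec] at hw
    rw [← hw]; funext y; simp
  induction n with
  | zero => simp [Matrix.one_mulVec]
  | succ n ih =>
      rw [Finset.sum_range_succ, ih]
      have : (Qmat p ^ (n+1)) *ᵥ w = (Qmat p ^ n) *ᵥ w - (Qmat p ^ n) *ᵥ d := by
        rw [pow_succ, ← Matrix.mulVec_mulVec, hQw, Matrix.mulVec_sub]
      rw [this]
      funext y; simp; ring

lemma series_solution {p : St N → Event N → ℝ} (hp : IsRule p) {g : ℕ → ℝ}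
    (hgs : Summable g) (hgt : Tendsto g atTop (𝓝 0))
    (hg : ∀ (t : ℕ) (x y : TS N), (Qmat p ^ t) x y ≤ g t)
    {w d : TS N → ℝ} (hw : (1 - Qmat p) *ᵥ w = d) (x : TS N) :
    Summable (fun t => ((Qmat p ^ t) *ᵥ d) x) ∧
    (∑' t, ((Qmat p ^ t) *ᵥ d) x) = w x ∧
    Tendsto (fun n => ∑ t ∈ Finset.range n, ((Qmat p ^ t) *ᵥ d) x) atTop (𝓝 (w x)) := by
  have hb := vec_bound hp hg d
  have hsum : Summable (fun t => ((Qmat p ^ t) *ᵥ d) x) := by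
    refine Summable.of_norm_bounded (g := fun t => g t * ∑ y : TS N, |d y|)
      (hgs.mul_right _) (fun t => ?_)
    rw [Real.norm_eq_abs]; exact hb t x
  have htend : Tendsto (fun n => ∑ t ∈ Finset.range n, ((Qmat p ^ t) *ᵥ d) x)
      atTop (𝓝 (w x)) := by
    have heq : ∀ n, ∑ t ∈ Finset.range n, ((Qmat p ^ t) *ᵥ d) x
        = w x - ((Qmat p ^ n) *ᵥ w) x := by
      intro n
      have := congrFun (partial_sums_eq hw n) x
      simpa using this
    simp only [heq]
    have h2 : Tendsto (fun n => ((Qmat p ^ n) *ᵥ w) x) atTop (𝓝 0) := by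
      refine squeeze_zero_norm (fun n => ?_) (by simpa using hgt.mul_const (∑ y : TS N, |w y|))
      rw [Real.norm_eq_abs]; exact vec_bound hp hg w n x
    simpa using (tendsto_const_nhds (x := w x)).sub h2
  exact ⟨hsum, tendsto_nhds_unique (hsum.hasSum.tendsto_sum_nat) htend, htend⟩

lemma det_ne_zero {p : St N → Event N → ℝ} (hp : IsRule p) {g : ℕ → ℝ}
    (hgt : Tendsto g atTop (𝓝 0))
    (hg : ∀ (t : ℕ) (x y : TS N), (Qmat p ^ t) x y ≤ g t) :
    (1 - Qmat p).det ≠ 0 := by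
  have hinj : Function.Injective ((1 - Qmat p).mulVec) := by
    intro a b hab
    have hz : (1 - Qmat p) *ᵥ (a - b) = 0 := by
      rw [Matrix.mulVec_sub, hab, sub_self]
    have hQ : Qmat p *ᵥ (a - b) = a - b := by
      rw [Matrix.sub_mulVec, Matrix.one_mulVec] at hz
      have := sub_eq_zero.1 hz
      exact this.symm
    have hpow : ∀ t : ℕ, (Qmat p ^ t) *ᵥ (a - b) = a - b := by
      intro t
      induction t with
      | zero => simp [Matrix.one_mulVec]
      | succ t ih => rw [pow_succ, ← Matrix.mulVec_mulVec, hQ, ih]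
    have hzero : a - b = 0 := by
      funext x
      have hbd : ∀ t, |(a - b) x| ≤ g t * ∑ y : TS N, |(a - b) y| := by
        intro t
        have := vec_bound hp hg (a - b) t x
        rwa [hpow t] at this
      have hlim : Tendsto (fun t => g t * ∑ y : TS N, |(a - b) y|) atTop (𝓝 0) := by
        simpa using hgt.mul_const (∑ y : TS N, |(a - b) y|)
      have h0 : |(a - b) x| ≤ 0 :=
        ge_of_tendsto hlim (Filter.Eventually.of_forall (fun t => hbd t))
      have : |(a - b) x| = 0 := le_antisymm h0 (abs_nonneg _)
      simpa [abs_eq_zero] using this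
    rw [sub_eq_zero] at hzero
    exact hzero
  have : IsUnit (1 - Qmat p) := Matrix.mulVec_injective_iff_isUnit.1 hinj
  exact (Matrix.isUnit_iff_isUnit_det _).1 this |>.ne_zero

end Helpers6

section Helpers7
open Matrix
variable {N : ℕ}

lemma hatx_stA (π : Fin N → ℝ) : hatx π (stA N) = ∑ i, π i := by
  simp [hatx, stA, bv]

lemma hatx_stB (π : Fin N → ℝ) : hatx π (stB N) = 0 := by
  simp [hatx, stB, bv]

lemma dsel'_const (π : Fin N → ℝ) (p : ℝ → St N → Event N → ℝ) (c : Bool) :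
    dsel' π p (fun _ => c) = 0 := by
  simp [dsel']

lemma dsel'_stA (π : Fin N → ℝ) (p : ℝ → St N → Event N → ℝ) :
    dsel' π p (stA N) = 0 := dsel'_const π p true

lemma dsel'_stB (π : Fin N → ℝ) (p : ℝ → St N → Event N → ℝ) :
    dsel' π p (stB N) = 0 := dsel'_const π p false

lemma fixA_partial {p : St N → Event N → ℝ} (hp : IsRule p) (hN : 0 < N)
    (ξ : TS N) (n : ℕ) :
    (tmat p ^ n) ξ.1 (stA N) = ∑ t ∈ Finset.range n, ((Qmat p ^ t) *ᵥ bvec p) ξ := by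
  induction n with
  | zero =>
      simp [Matrix.one_apply, show ¬ ξ.1 = stA N from ξ.2.1]
  | succ n ih =>
      rw [pow_succ, Matrix.mul_apply, Finset.sum_range_succ, ← ih]
      rw [sum_split' hN (fun z => (tmat p ^ n) ξ.1 z * tmat p z (stA N))]
      have hA : tmat p (stA N) (stA N) = 1 := by
        rw [show stA N = (fun _ => true) from rfl, tmat_const hp]; simp
      have hB : tmat p (stB N) (stA N) = 0 := by
        rw [show stB N = (fun _ => false) from rfl, tmat_const hp]
        simp [show ¬ stA N = (fun _ => false) from
          fun h => (stA_ne_stB hN) (h.trans rfl)]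
      rw [hA, hB, mul_one, mul_zero, add_zero]
      have hQ : ∑ z : TS N, (tmat p ^ n) ξ.1 z.1 * tmat p z.1 (stA N)
          = ((Qmat p ^ n) *ᵥ bvec p) ξ := by
        simp only [Matrix.mulVec, dotProduct]
        exact Finset.sum_congr rfl fun z _ => by rw [pow_restrict hp n ξ z]; rfl
      rw [hQ, add_comm]

lemma hatx_transfer (q : Event N → ℝ) (π : Fin N → ℝ) (x : St N) :
    ∑ e : Event N, q e * hatx π (upd e x)
      = (∑ e : Event N, q e) * hatx π x
        + ∑ i, π i * ∑ j, (bv (x j) - bv (x i)) * emarg q j i := by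
  have key : ∀ i : Fin N, ∑ j, (bv (x j) - bv (x i)) * emarg q j i
      = ∑ e : Event N, (q e * bv (x (extMap e i)) - q e * bv (x i)) := by
    intro i
    have hA : ∑ j, emarg q j i * bv (x j)
        = ∑ e : Event N, (if i ∈ e.1 then q e * bv (x (e.2 i)) else 0) := by
      simp only [emarg, Finset.sum_mul, ite_mul, zero_mul]
      rw [Finset.sum_comm]
      refine Finset.sum_congr rfl fun e _ => ?_
      by_cases hi : i ∈ e.1
      · simp only [hi, true_and]
        rw [Finset.sum_ite_eq Finset.univ (e.2 i) (fun j => q e * bv (x j))]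
        simp
      · simp [hi]
    have hB : ∑ j, emarg q j i * bv (x i)
        = ∑ e : Event N, (if i ∈ e.1 then q e * bv (x i) else 0) := by
      simp only [emarg, Finset.sum_mul, ite_mul, zero_mul]
      rw [Finset.sum_comm]
      refine Finset.sum_congr rfl fun e _ => ?_
      by_cases hi : i ∈ e.1
      · simp only [hi, true_and]
        rw [Finset.sum_ite_eq Finset.univ (e.2 i) (fun _ => q e * bv (x i))]
        simp
      · simp [hi]
    have expand : ∑ j, (bv (x j) - bv (x i)) * emarg q j i
        = (∑ j, emarg q j i * bv (x j)) - ∑ j, emarg q j i * bv (x i) := by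
      rw [← Finset.sum_sub_distrib]
      exact Finset.sum_congr rfl fun j _ => by ring
    rw [expand, hA, hB, ← Finset.sum_sub_distrib]
    refine Finset.sum_congr rfl fun e _ => ?_
    by_cases hi : i ∈ e.1 <;> simp [hi, extMap]
  have lhs : ∑ e : Event N, q e * hatx π (upd e x)
      = ∑ i, π i * ∑ e : Event N, q e * bv (x (extMap e i)) := by
    simp only [hatx, upd, Finset.mul_sum]
    rw [Finset.sum_comm]
    refine Finset.sum_congr rfl fun i _ => Finset.sum_congr rfl fun e _ => by ring
  rw [lhs]
  simp only [key]
  have rhs : ∀ i : Fin N, π i * ∑ e : Event N, (q e * bv (x (extMap e i)) - q e * bv (x i))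
      = π i * (∑ e : Event N, q e * bv (x (extMap e i))) - π i * ((∑ e : Event N, q e) * bv (x i)) := by
    intro i
    rw [Finset.sum_sub_distrib, mul_sub, ← Finset.sum_mul]
  simp only [rhs]
  rw [Finset.sum_sub_distrib]
  have h2 : ∑ i, π i * ((∑ e : Event N, q e) * bv (x i)) = (∑ e : Event N, q e) * hatx π x := by
    rw [hatx, Finset.mul_sum]
    exact Finset.sum_congr rfl fun i _ => by ring
  rw [h2]
  ring

lemma rv_zero {p0 : Event N → ℝ} {π : Fin N → ℝ} (hπ : IsRV p0 π) (x : St N) :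
    ∑ i, π i * ∑ j, (bv (x j) - bv (x i)) * emarg p0 j i = 0 := by
  have expand : ∑ i, π i * ∑ j, (bv (x j) - bv (x i)) * emarg p0 j i
      = (∑ i, ∑ j, bv (x j) * (emarg p0 j i * π i))
        - ∑ i, bv (x i) * ∑ j, emarg p0 j i * π i := by
    rw [← Finset.sum_sub_distrib]
    refine Finset.sum_congr rfl fun i _ => ?_
    rw [Finset.mul_sum, Finset.mul_sum, ← Finset.sum_sub_distrib]
    exact Finset.sum_congr rfl fun j _ => by ring
  rw [expand]
  have h1 : ∑ i, ∑ j, bv (x j) * (emarg p0 j i * π i)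
      = ∑ j, bv (x j) * ∑ i, emarg p0 j i * π i := by
    rw [Finset.sum_comm]
    exact Finset.sum_congr rfl fun j _ => by rw [Finset.mul_sum]
  rw [h1]
  have h2 : ∀ j, ∑ i, emarg p0 j i * π i = ∑ i, emarg p0 i j * π j := fun j => hπ.1 j
  simp only [h2]
  simp

lemma star_identity (hN : 0 < N) (q : St N → Event N → ℝ) (π : Fin N → ℝ)
    (hπ2 : ∑ i, π i = 1) (x : TS N) :
    bvec q x + ∑ y : TS N, Qmat q x y * hatx π y.1
      = (∑ e : Event N, q x.1 e) * hatx π x.1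
        + ∑ i, π i * ∑ j, (bv (x.1 j) - bv (x.1 i)) * emarg (q x.1) j i := by
  have h1 := tmat_transfer q x.1 (hatx π)
  rw [sum_split' hN (fun y => tmat q x.1 y * hatx π y)] at h1
  rw [hatx_stA, hatx_stB, hπ2, mul_one, mul_zero, add_zero] at h1
  have h2 := hatx_transfer (q x.1) π x.1
  rw [h2] at h1
  rw [← h1, add_comm]
  rfl

end Helpers7

section Helpers8
open Matrix
variable {ι : Type*} [Fintype ι] [DecidableEq ι] {n : WithTop ℕ∞}

lemma contDiffAt_det' (A : ℝ → Matrix ι ι ℝ)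
    (h : ∀ i j, ContDiffAt ℝ n (fun δ => A δ i j) 0) :
    ContDiffAt ℝ n (fun δ => (A δ).det) 0 := by
  have heq : (fun δ => (A δ).det) = fun δ => ∑ σ : Equiv.Perm ι,
      ((Equiv.Perm.sign σ : ℤ) : ℝ) * ∏ i, A δ (σ i) i := by
    funext δ
    rw [Matrix.det_apply]
    refine Finset.sum_congr rfl fun σ _ => ?_
    rw [Units.smul_def, zsmul_eq_mul]
  rw [heq]
  refine ContDiffAt.sum fun σ _ => ?_
  exact (contDiffAt_const (c := ((Equiv.Perm.sign σ : ℤ) : ℝ))).mul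
    (contDiffAt_prod fun i _ => h (σ i) i)

lemma contDiffAt_adjugate (A : ℝ → Matrix ι ι ℝ)
    (h : ∀ i j, ContDiffAt ℝ n (fun δ => A δ i j) 0) (i j : ι) :
    ContDiffAt ℝ n (fun δ => (A δ).adjugate i j) 0 := by
  have heq : (fun δ => (A δ).adjugate i j)
      = fun δ => ((A δ).updateRow j (Pi.single i 1)).det := by
    funext δ; rw [Matrix.adjugate_apply]
  rw [heq]
  refine contDiffAt_det' _ fun a b => ?_
  by_cases ha : a = j
  · subst ha
    simp only [Matrix.updateRow_self]
    exact contDiffAt_const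
  · simp only [Matrix.updateRow_ne ha]
    exact h a b

end Helpers8

section Helpers9

lemma deriv_zero_of_right_const {f : ℝ → ℝ} {c ε : ℝ} (hε : 0 < ε)
    (hd : DifferentiableAt ℝ f 0) (hc : ∀ δ ∈ Set.Ico (0:ℝ) ε, f δ = c) :
    deriv f 0 = 0 := by
  have h1 : HasDerivWithinAt f (deriv f 0) (Set.Ici 0) 0 :=
    hd.hasDerivAt.hasDerivWithinAt
  have h2 : HasDerivWithinAt f 0 (Set.Ici 0) 0 := by
    have hconst : HasDerivWithinAt (fun _ : ℝ => c) 0 (Set.Ici 0) 0 :=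
      (hasDerivAt_const 0 c).hasDerivWithinAt
    refine hconst.congr_of_eventuallyEq ?_ (hc 0 ⟨le_rfl, hε⟩)
    filter_upwards [Ico_mem_nhdsGE hε]
      with δ hδ using hc δ hδ
  exact (uniqueDiffOn_Ici 0 0 Set.self_mem_Ici).eq_deriv _ h1 h2

end Helpers9
end HelperSection

open Matrix

/-- the weak-selection expansion of the fixation probability:
`ρ_A(ξ)` is differentiable at `δ = 0` with value `ξ̂` and derivative
`⟨(d/dδ)|₀ Δ̂_sel⟩°_ξ`; equivalently `ρ_A(ξ) = ξ̂ + δ⟨(d/dδ)|₀ Δ̂_sel⟩°_ξ + O(δ²)` as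
`δ → 0⁺`. -/
theorem statement5 {N : ℕ} (p : ℝ → St N → Event N → ℝ) (ε : ℝ) (hε : 0 < ε)
    (hrule : ∀ δ ∈ Set.Ico (0 : ℝ) ε, IsRule (p δ))
    (hfix : ∀ δ ∈ Set.Ico (0 : ℝ) ε, FixAxiom (p δ))
    (hsm : ∀ x e, ContDiffAt ℝ (⊤ : ℕ∞) (fun d => p d x e) 0)
    (p0 : Event N → ℝ) (hneut : ∀ x e, p 0 x e = p0 e)
    (π : Fin N → ℝ) (hπ : IsRV p0 π)
    (ξ : St N) (hξ : Transient ξ)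
    (ρ : ℝ → ℝ)
    (hρ : ∀ δ ∈ Set.Ico (0 : ℝ) ε,
      Tendsto (fun t : ℕ => (tmat (p δ) ^ t) ξ (stA N)) atTop (𝓝 (ρ δ))) :
    ρ 0 = hatx π ξ ∧
    HasDerivWithinAt ρ (sgen (fun _ => p0) ξ (dsel' π p)) (Set.Ici 0) 0 ∧
    (fun δ => ρ δ - (hatx π ξ + δ * sgen (fun _ => p0) ξ (dsel' π p)))
      =O[𝓝[>] (0 : ℝ)] (fun δ => δ ^ 2) := by
  classical
  -- N is positive
  have hN : 0 < N := by
    rcases Nat.eq_zero_or_pos N with h | h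
    · subst h; exact absurd (funext fun i => i.elim0) hξ.1
    · exact h
  set ξT : TS N := ⟨ξ, hξ⟩ with hξTdef
  have h0mem : (0:ℝ) ∈ Set.Ico (0:ℝ) ε := ⟨le_rfl, hε⟩
  have hp0 : IsRule (p 0) := hrule 0 h0mem
  have hneut' : p 0 = fun _ => p0 := funext fun x => funext fun e => hneut x e
  -- matrices as functions of δ
  set Q : ℝ → Matrix (TS N) (TS N) ℝ := fun δ => Qmat (p δ) with hQdef
  set b : ℝ → TS N → ℝ := fun δ => bvec (p δ) with hbdef
  set M : ℝ → Matrix (TS N) (TS N) ℝ := fun δ => 1 - Q δ with hMdef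
  -- smoothness of entries
  have hsmQ : ∀ x y : TS N, ContDiffAt ℝ (⊤ : ℕ∞) (fun δ => Q δ x y) 0 := by
    intro x y
    have hfe : (fun δ => Q δ x y)
        = fun δ => ∑ e : Event N, if upd e x.1 = y.1 then p δ x.1 e else 0 := rfl
    rw [hfe]
    refine ContDiffAt.sum fun e _ => ?_
    by_cases h : upd e x.1 = y.1
    · simp only [if_pos h]; exact hsm x.1 e
    · simp only [if_neg h]; exact contDiffAt_const
  have hsmb : ∀ x : TS N, ContDiffAt ℝ (⊤ : ℕ∞) (fun δ => b δ x) 0 := by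
    intro x
    have hfe : (fun δ => b δ x)
        = fun δ => ∑ e : Event N, if upd e x.1 = stA N then p δ x.1 e else 0 := rfl
    rw [hfe]
    refine ContDiffAt.sum fun e _ => ?_
    by_cases h : upd e x.1 = stA N
    · simp only [if_pos h]; exact hsm x.1 e
    · simp only [if_neg h]; exact contDiffAt_const
  have hsmM : ∀ x y : TS N, ContDiffAt ℝ (⊤ : ℕ∞) (fun δ => M δ x y) 0 := by
    intro x y
    have hfe : (fun δ => M δ x y)
        = fun δ => (1 : Matrix (TS N) (TS N) ℝ) x y - Q δ x y := by
      funext δ; rw [hMdef]; rfl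
    rw [hfe]
    exact contDiffAt_const.sub (hsmQ x y)
  have hsmdet : ContDiffAt ℝ (⊤ : ℕ∞) (fun δ => (M δ).det) 0 := contDiffAt_det' M hsmM
  -- invertibility at 0
  obtain ⟨g0, hg0s, hg00, hg0t, hg0b⟩ := exists_decay hp0 (hfix 0 h0mem)
  have hdet0 : (M 0).det ≠ 0 := det_ne_zero hp0 hg0t hg0b
  -- the candidate smooth solution
  set F : ℝ → TS N → ℝ :=
    fun δ x => ((M δ).det)⁻¹ * ∑ y : TS N, (M δ).adjugate x y * b δ y with hFdef
  have hFsmul : ∀ δ, F δ = ((M δ).det)⁻¹ • ((M δ).adjugate *ᵥ b δ) := by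
    intro δ; funext x
    simp [hFdef, Matrix.mulVec, dotProduct]
  have hFvec : ∀ δ, (M δ).det ≠ 0 → M δ *ᵥ F δ = b δ := by
    intro δ hdet
    rw [hFsmul δ, Matrix.mulVec_smul, Matrix.mulVec_mulVec, Matrix.mul_adjugate,
      Matrix.smul_mulVec, Matrix.one_mulVec, smul_smul,
      inv_mul_cancel₀ hdet, one_smul]
  have hFsm : ∀ x : TS N, ContDiffAt ℝ (⊤ : ℕ∞) (fun δ => F δ x) 0 := by
    intro x
    refine ContDiffAt.mul (ContDiffAt.inv hsmdet hdet0) ?_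
    exact ContDiffAt.sum fun y _ => (contDiffAt_adjugate M hsmM x y).mul (hsmb y)
  -- derivatives
  set D : TS N → ℝ := fun x => deriv (fun δ => F δ x) 0 with hDdef
  have hFd : ∀ x : TS N, HasDerivAt (fun δ => F δ x) (D x) 0 := fun x =>
    ((hFsm x).differentiableAt (by simp)).hasDerivAt
  set Q' : TS N → TS N → ℝ := fun x y => deriv (fun δ => Q δ x y) 0 with hQ'def
  have hQd : ∀ x y : TS N, HasDerivAt (fun δ => Q δ x y) (Q' x y) 0 := fun x y =>
    ((hsmQ x y).differentiableAt (by simp)).hasDerivAt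
  set b' : TS N → ℝ := fun x => deriv (fun δ => b δ x) 0 with hb'def
  have hbd : ∀ x : TS N, HasDerivAt (fun δ => b δ x) (b' x) 0 := fun x =>
    ((hsmb x).differentiableAt (by simp)).hasDerivAt
  have hMd : ∀ x y : TS N, HasDerivAt (fun δ => M δ x y) (-(Q' x y)) 0 := by
    intro x y
    have hfe : (fun δ => M δ x y)
        = fun δ => (1 : Matrix (TS N) (TS N) ℝ) x y - Q δ x y := by
      funext δ; rw [hMdef]; rfl
    rw [hfe]
    simpa using (hasDerivAt_const (0:ℝ) ((1 : Matrix (TS N) (TS N) ℝ) x y)).fun_sub (hQd x y)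
  -- the system, differentiated
  have hdet_ev : ∀ᶠ δ in 𝓝 (0:ℝ), (M δ).det ≠ 0 :=
    (hsmdet.continuousAt).eventually_ne hdet0
  have hsys : ∀ x : TS N,
      ∑ y : TS N, (-(Q' x y) * F 0 y + M 0 x y * D y) = b' x := by
    intro x
    have hL : HasDerivAt (fun δ => ∑ y : TS N, M δ x y * F δ y)
        (∑ y : TS N, (-(Q' x y) * F 0 y + M 0 x y * D y)) 0 := by
      refine HasDerivAt.fun_sum fun y _ => ?_
      exact (hMd x y).mul (hFd y)
    have heq : (fun δ => b δ x) =ᶠ[𝓝 (0:ℝ)] (fun δ => ∑ y : TS N, M δ x y * F δ y) := by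
      filter_upwards [hdet_ev] with δ hδ
      have := congrFun (hFvec δ hδ) x
      simp only [Matrix.mulVec, dotProduct] at this
      exact this.symm
    have hR : HasDerivAt (fun δ => b δ x)
        (∑ y : TS N, (-(Q' x y) * F 0 y + M 0 x y * D y)) 0 :=
      hL.congr_of_eventuallyEq heq
    exact hR.unique (hbd x)
  -- value at zero
  set hatxT : TS N → ℝ := fun y => hatx π y.1 with hhatxTdef
  have hstar0 : M 0 *ᵥ hatxT = b 0 := by
    funext x
    have hst := star_identity hN (p 0) π hπ.2 x
    rw [hp0.2 x.1, one_mul] at hst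
    have hz : ∑ i, π i * ∑ j, (bv (x.1 j) - bv (x.1 i)) * emarg (p 0 x.1) j i = 0 := by
      have he : emarg (p 0 x.1) = emarg p0 := by rw [hneut']
      rw [he]; exact rv_zero hπ x.1
    rw [hz, add_zero] at hst
    show ((1 - Qmat (p 0)) *ᵥ hatxT) x = bvec (p 0) x
    rw [Matrix.sub_mulVec, Matrix.one_mulVec]
    have h5 : ((Qmat (p 0)) *ᵥ hatxT) x = ∑ y : TS N, Qmat (p 0) x y * hatx π y.1 := by
      simp [Matrix.mulVec, dotProduct]; rfl
    have h6 : (hatxT - (Qmat (p 0)) *ᵥ hatxT) x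
        = hatx π x.1 - ((Qmat (p 0)) *ᵥ hatxT) x := rfl
    rw [h6, h5]
    linarith [hst]
  -- F 0 = hatxT
  have hunit0 : IsUnit (M 0) :=
    (Matrix.isUnit_iff_isUnit_det _).2 (isUnit_iff_ne_zero.2 hdet0)
  have hinj0 : Function.Injective ((M 0).mulVec) :=
    Matrix.mulVec_injective_iff_isUnit.2 hunit0
  have hF0 : F 0 = hatxT := by
    apply hinj0
    rw [hFvec 0 hdet0, hstar0]
  -- the derivative of the inhomogeneous term is dsel'
  set dT : TS N → ℝ := fun x => dsel' π p x.1 with hdTdef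
  have hbQd : ∀ x : TS N, b' x + ∑ y : TS N, Q' x y * hatxT y = dT x := by
    intro x
    -- star identity as functions of δ
    have hstarfun : (fun δ => b δ x + ∑ y : TS N, Q δ x y * hatxT y)
        = fun δ => (∑ e : Event N, p δ x.1 e) * hatx π x.1
            + ∑ i, π i * ∑ j, (bv (x.1 j) - bv (x.1 i)) * emarg (p δ x.1) j i :=
      funext fun δ => star_identity hN (p δ) π hπ.2 x
    -- LHS derivative
    have hL : HasDerivAt (fun δ => b δ x + ∑ y : TS N, Q δ x y * hatxT y)
        (b' x + ∑ y : TS N, Q' x y * hatxT y) 0 :=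
      (hbd x).add (HasDerivAt.fun_sum fun y _ => (hQd x y).mul_const (hatxT y))
    -- RHS derivative
    have hsmem : ∀ j i : Fin N, ContDiffAt ℝ (⊤ : ℕ∞) (fun δ => emarg (p δ x.1) j i) 0 := by
      intro j i
      have hfe : (fun δ => emarg (p δ x.1) j i)
          = fun δ => ∑ e : Event N, if i ∈ e.1 ∧ e.2 i = j then p δ x.1 e else 0 := rfl
      rw [hfe]
      refine ContDiffAt.sum fun e _ => ?_
      by_cases h : i ∈ e.1 ∧ e.2 i = j
      · simp only [if_pos h]; exact hsm x.1 e
      · simp only [if_neg h]; exact contDiffAt_const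
    have hsfun : ContDiffAt ℝ (⊤ : ℕ∞) (fun δ => ∑ e : Event N, p δ x.1 e) 0 :=
      ContDiffAt.sum fun e _ => hsm x.1 e
    have hs0 : deriv (fun δ => ∑ e : Event N, p δ x.1 e) 0 = 0 :=
      deriv_zero_of_right_const hε (hsfun.differentiableAt (by simp))
        (fun δ hδ => (hrule δ hδ).2 x.1)
    have hR : HasDerivAt (fun δ => (∑ e : Event N, p δ x.1 e) * hatx π x.1
        + ∑ i, π i * ∑ j, (bv (x.1 j) - bv (x.1 i)) * emarg (p δ x.1) j i)
        (dT x) 0 := by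
      have h1 : HasDerivAt (fun δ => (∑ e : Event N, p δ x.1 e) * hatx π x.1)
          (0 * hatx π x.1) 0 := by
        have := ((hsfun.differentiableAt (by simp)).hasDerivAt).mul_const (hatx π x.1)
        rwa [hs0] at this
      have h2 : HasDerivAt
          (fun δ => ∑ i, π i * ∑ j, (bv (x.1 j) - bv (x.1 i)) * emarg (p δ x.1) j i)
          (∑ i, π i * ∑ j, (bv (x.1 j) - bv (x.1 i))
            * deriv (fun d => emarg (p d x.1) j i) 0) 0 := by
        refine HasDerivAt.fun_sum fun i _ => ?_
        refine HasDerivAt.const_mul (π i) ?_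
        refine HasDerivAt.fun_sum fun j _ => ?_
        refine HasDerivAt.const_mul _ ?_
        exact ((hsmem j i).differentiableAt (by simp)).hasDerivAt
      have := h1.add h2
      rw [zero_mul, zero_add] at this
      exact this
    have hLR : HasDerivAt (fun δ => b δ x + ∑ y : TS N, Q δ x y * hatxT y) (dT x) 0 := by
      rw [hstarfun]; exact hR
    exact hL.unique hLR
  -- the linear system for D
  have hsysD : (1 - Qmat (p 0)) *ᵥ D = dT := by
    funext x
    have h1 := hsys x
    rw [Finset.sum_add_distrib] at h1
    have h2 : ∑ y : TS N, -Q' x y * F 0 y = -(∑ y : TS N, Q' x y * hatxT y) := by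
      rw [hF0, ← Finset.sum_neg_distrib]
      exact Finset.sum_congr rfl fun y _ => by ring
    rw [h2] at h1
    have h3 : ∑ y : TS N, M 0 x y * D y = b' x + ∑ y : TS N, Q' x y * hatxT y := by
      linarith
    have h4 : ((1 - Qmat (p 0)) *ᵥ D) x = ∑ y : TS N, M 0 x y * D y := by
      simp [Matrix.mulVec, dotProduct, hMdef, hQdef]
    rw [h4, h3, hbQd x]
  -- sgen equals D ξT
  have hseries := series_solution hp0 hg0s hg0t hg0b hsysD ξT
  have hsgen : sgen (fun _ => p0) ξ (dsel' π p) = D ξT := by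
    have htm : tmat (fun _ => p0) = tmat (p 0) := by rw [hneut']
    have hinner : ∀ t : ℕ, ∑ x : St N, (tmat (fun _ => p0) ^ t) ξ x * dsel' π p x
        = ((Qmat (p 0) ^ t) *ᵥ dT) ξT := by
      intro t
      rw [htm]
      rw [sum_split (fun x => (tmat (p 0) ^ t) ξ x * dsel' π p x)
        (by show (tmat (p 0) ^ t) ξ (stA N) * dsel' π p (stA N) = 0
            rw [dsel'_stA]; ring)
        (by show (tmat (p 0) ^ t) ξ (stB N) * dsel' π p (stB N) = 0
            rw [dsel'_stB]; ring)]
      simp only [Matrix.mulVec, dotProduct]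
      refine Finset.sum_congr rfl fun z _ => ?_
      rw [show (ξ : St N) = ξT.1 from rfl, pow_restrict hp0 t ξT z]
    rw [sgen]
    simp only [hinner]
    exact hseries.2.1
  -- ρ agrees with F on [0, ε)
  have hρF : ∀ δ ∈ Set.Ico (0:ℝ) ε, ρ δ = F δ ξT := by
    intro δ hδ
    have hpδ : IsRule (p δ) := hrule δ hδ
    obtain ⟨g, hgs, hg0', hgt, hgb⟩ := exists_decay hpδ (hfix δ hδ)
    have hdetδ : (M δ).det ≠ 0 := det_ne_zero hpδ hgt hgb
    have hvec : (1 - Qmat (p δ)) *ᵥ F δ = b δ := hFvec δ hdetδ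
    have hser := series_solution hpδ hgs hgt hgb hvec ξT
    have htend2 : Tendsto (fun n : ℕ => (tmat (p δ) ^ n) ξ (stA N)) atTop (𝓝 (F δ ξT)) := by
      have heqn : ∀ n : ℕ, (tmat (p δ) ^ n) ξ (stA N)
          = ∑ t ∈ Finset.range n, ((Qmat (p δ) ^ t) *ᵥ bvec (p δ)) ξT :=
        fun n => fixA_partial hpδ hN ξT n
      rw [show Tendsto (fun n : ℕ => (tmat (p δ) ^ n) ξ (stA N)) atTop (𝓝 (F δ ξT))
        ↔ Tendsto (fun n : ℕ => ∑ t ∈ Finset.range n, ((Qmat (p δ) ^ t) *ᵥ bvec (p δ)) ξT)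
          atTop (𝓝 (F δ ξT)) from by rw [funext heqn]]
      exact hser.2.2
    exact tendsto_nhds_unique (hρ δ hδ) htend2
  -- Part 1
  have hρ0 : ρ 0 = hatx π ξ := by
    rw [hρF 0 h0mem, hF0]
  refine ⟨hρ0, ?_, ?_⟩
  · -- Part 2
    have hev : ρ =ᶠ[𝓝[Set.Ici (0:ℝ)] 0] (fun δ => F δ ξT) := by
      filter_upwards [Ico_mem_nhdsGE hε] with δ hδ
        using hρF δ hδ
    have hF0ξ : ρ 0 = F 0 ξT := by rw [hρ0, hF0]
    have := ((hFd ξT).hasDerivWithinAt (s := Set.Ici (0:ℝ))).congr_of_eventuallyEq hev hF0ξ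
    rwa [hsgen]
  · -- Part 3 : big-O
    set Fξ : ℝ → ℝ := fun δ => F δ ξT with hFξdef
    have hC2 : ContDiffAt ℝ 2 Fξ 0 := (hFsm ξT).of_le (WithTop.coe_le_coe.2 le_top)
    obtain ⟨u, hu_nhds, hu⟩ := hC2.contDiffOn le_rfl (by simp)
    obtain ⟨V, hVu, hVopen, hV0⟩ := mem_nhds_iff.1 hu_nhds
    have hFV : ContDiffOn ℝ 2 Fξ V := hu.mono hVu
    have hderivC1 : ContDiffOn ℝ 1 (deriv Fξ) V :=
      hFV.deriv_of_isOpen hVopen (by norm_num)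
    have hd0 : DifferentiableAt ℝ (deriv Fξ) 0 :=
      ((hderivC1.differentiableOn one_ne_zero) 0 hV0).differentiableAt (hVopen.mem_nhds hV0)
    have hBig : (fun δ => deriv Fξ δ - deriv Fξ 0) =O[𝓝 (0:ℝ)] fun δ => δ - 0 :=
      hd0.hasDerivAt.isBigO_sub
    obtain ⟨C, hC0, hCb⟩ := hBig.exists_nonneg
    have hCev : ∀ᶠ δ in 𝓝 (0:ℝ), |deriv Fξ δ - deriv Fξ 0| ≤ C * |δ| := by
      have := hCb.bound
      filter_upwards [this] with δ hδ
      simpa [Real.norm_eq_abs] using hδ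
    obtain ⟨η, hη0, hηsub⟩ := Metric.mem_nhds_iff.1 (Filter.inter_mem (hVopen.mem_nhds hV0) hCev)
    -- derivative value
    have hderivFξ0 : deriv Fξ 0 = D ξT := (hFd ξT).deriv
    have hkey : ∀ δ : ℝ, 0 < δ → δ < η / 2 → δ < ε →
        |ρ δ - (hatx π ξ + δ * sgen (fun _ => p0) ξ (dsel' π p))| ≤ C * |δ ^ 2| := by
      intro δ hδ0 hδη hδε
      have hδIco : δ ∈ Set.Ico (0:ℝ) ε := ⟨hδ0.le, hδε⟩
      have hsubset : Set.Icc (0:ℝ) δ ⊆ Metric.ball (0:ℝ) η := by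
        intro t ht
        rw [Metric.mem_ball, Real.dist_eq, sub_zero]
        rw [abs_of_nonneg ht.1]
        have := ht.2
        linarith [hη0]
      set c0 : ℝ := deriv Fξ 0 with hc0def
      set g : ℝ → ℝ := fun t => Fξ t - t * c0 with hgdef
      have hgd : ∀ t ∈ Set.Icc (0:ℝ) δ,
          HasDerivWithinAt g (deriv Fξ t - c0) (Set.Icc (0:ℝ) δ) t := by
        intro t ht
        have htV : t ∈ V := (hηsub (hsubset ht)).1
        have hdiff : DifferentiableAt ℝ Fξ t :=
          ((hFV.differentiableOn (by norm_num)) t htV).differentiableAt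
            (hVopen.mem_nhds htV)
        have hh := (hdiff.hasDerivAt.fun_sub ((hasDerivAt_id t).mul_const c0)).hasDerivWithinAt
          (s := Set.Icc (0:ℝ) δ)
        simpa [hgdef] using hh
      have hbound : ∀ t ∈ Set.Icc (0:ℝ) δ, ‖deriv Fξ t - c0‖ ≤ C * δ := by
        intro t ht
        have htb : t ∈ Metric.ball (0:ℝ) η := hsubset ht
        have h1 : |deriv Fξ t - deriv Fξ 0| ≤ C * |t| := (hηsub htb).2
        rw [Real.norm_eq_abs]
        calc |deriv Fξ t - c0| ≤ C * |t| := h1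
          _ ≤ C * δ := by
            refine mul_le_mul_of_nonneg_left ?_ hC0
            rw [abs_of_nonneg ht.1]; exact ht.2
      have hmvt := Convex.norm_image_sub_le_of_norm_hasDerivWithin_le hgd hbound
        (convex_Icc 0 δ) (Set.left_mem_Icc.2 hδ0.le)
        (Set.right_mem_Icc.2 hδ0.le)
      -- hmvt : ‖g δ - g 0‖ ≤ C * δ * ‖δ - 0‖
      have hgδ : g δ - g 0 = Fξ δ - Fξ 0 - δ * c0 := by
        simp [hgdef]
        try ring
      rw [hgδ, Real.norm_eq_abs, sub_zero, Real.norm_eq_abs] at hmvt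
      have hρδ : ρ δ = Fξ δ := hρF δ hδIco
      have hFξ0 : Fξ 0 = hatx π ξ := by show F 0 ξT = hatx π ξ; rw [hF0]
      have hsgen' : sgen (fun _ => p0) ξ (dsel' π p) = c0 := by
        rw [hsgen]
        try linarith [hderivFξ0]
      rw [hρδ, hFξ0.symm, hsgen']
      calc |Fξ δ - (Fξ 0 + δ * c0)| = |Fξ δ - Fξ 0 - δ * c0| := by ring_nf
        _ ≤ C * δ * |δ| := hmvt
        _ = C * |δ ^ 2| := by
            rw [abs_of_nonneg hδ0.le, abs_of_nonneg (by positivity : (0:ℝ) ≤ δ ^ 2)]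
            ring
    refine Asymptotics.IsBigO.of_bound C ?_
    have hmem : Set.Ioc (0:ℝ) (min (η/2/2) (ε/2)) ∈ 𝓝[>] (0:ℝ) :=
      Ioc_mem_nhdsGT_of_mem ⟨le_rfl, by positivity⟩
    filter_upwards [hmem] with δ hδ
    have h1 : 0 < δ := hδ.1
    have h2 : δ < η / 2 := lt_of_le_of_lt hδ.2 (by
      have := min_le_left (η/2/2) (ε/2)
      have hη2 : 0 < η / 2 := by positivity
      calc min (η/2/2) (ε/2) ≤ η/2/2 := min_le_left _ _
        _ < η/2 := by linarith)
    have h3 : δ < ε := lt_of_le_of_lt hδ.2 (by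
      calc min (η/2/2) (ε/2) ≤ ε/2 := min_le_right _ _
        _ < ε := by linarith)
    have := hkey δ h1 h2 h3
    simpa [Real.norm_eq_abs] using this


end Evo
end

section
/- Fix ξ ∈ 𝔹_T^N and D ≥ 0. The linear system η_I = ξ̂ − ξ_I + Σ_{(R,α)} p°_{(R,α)} η_{α̃(I)} for all nonempty I ⊆ {1,…,N} with |I| ≤ D+1, together with the normalization Σ_{i=1}^N π_i η_{{i}} = 0, has exactly one solution, and it is given by η_I = ⟨x̂ − x_I⟩°_ξ, where x_I := Π_{i∈I} x_i and ξ_I := Π_{i∈I} ξ_i. -/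
/-!
The neutral chain acts on observables by `(P φ)(x) = Σ p°(R,α) φ(x_α̃)`. Since
`(x_α̃)_I = x_{α̃(I)}` and the reproductive-value equations make `x̂` a martingale,
`P (x̂ - x_I) = Σ p° (x̂ - x_{α̃(I)})`. The Fixation Axiom makes the mass on transient states decay
geometrically, so `⟨φ⟩°_ξ` converges for observables vanishing at `𝐀` and `𝐁` and satisfies
`⟨φ⟩°_ξ = φ(ξ) + ⟨P φ⟩°_ξ`; this gives the system, and the normalization holds because
`Σ_i π_i (x̂ - x_i) = 0` identically.

The difference of two solutions has the mean-value property `δ_I = Σ p° δ_{α̃(I)}` on the nonempty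
sets of size at most `D + 1`, a family closed under `α̃`. By the maximum principle its maximum and
minimum propagate along the fixation sequence, which collapses every set to `{i}`; so the difference
is constant, and the normalization forces it to vanish.
-/

open Finset Filter Asymptotics Topology

namespace Evo

/-- The linear system defining the sojourn quantities `η_I`: for every nonempty
`I ⊆ {1,…,N}` with `|I| ≤ D + 1`, `η_I = E(I) + Σ_{(R,α)} p°_{(R,α)} η_{α̃(I)}`,
together with the normalization `Σ_i π_i η_{{i}} = 0`. -/
def EtaSystem {N : ℕ} (p0 : Event N → ℝ) (π : Fin N → ℝ) (E : Finset (Fin N) → ℝ)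
    (D : ℕ) (η : Finset (Fin N) → ℝ) : Prop :=
  (∀ I : Finset (Fin N), 1 ≤ I.card → I.card ≤ D + 1 →
    η I = E I + ∑ e : Event N, p0 e * η (I.image (extMap e))) ∧
  (∑ i, π i * η {i} = 0)

end Evo

open Matrix

theorem summable_pow_div_of_lt_one {r : ℝ} (hr0 : 0 ≤ r) (hr1 : r < 1) {m : ℕ} (hm : 0 < m) :
    Summable fun t : ℕ => r ^ (t / m) := by
  have : NeZero m := ⟨hm.ne'⟩
  rw [← (Nat.divModEquiv m).symm.summable_iff]
  have h := (summable_geometric_of_lt_one hr0 hr1).mul_of_nonneg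
    (summable_of_hasFiniteSupport (Set.toFinite (Function.support fun _ : Fin m => (1 : ℝ))))
    (fun _ => pow_nonneg hr0 _) (fun _ => zero_le_one)
  convert h using 2 with p
  simp only [Function.comp_apply, Nat.divModEquiv_symm_apply, mul_one]
  rw [add_comm, Nat.add_mul_div_right _ _ hm, Nat.div_eq_of_lt p.2.is_lt, zero_add]

theorem Finset.eq_of_sum_mul_eq_of_le {ι : Type*} {s : Finset ι} {w a : ι → ℝ} {M : ℝ}
    (hw : ∀ i ∈ s, 0 ≤ w i) (hw1 : ∑ i ∈ s, w i = 1) (ha : ∀ i ∈ s, a i ≤ M)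
    (hsum : ∑ i ∈ s, w i * a i = M) {i : ι} (hi : i ∈ s) (hwi : 0 < w i) : a i = M := by
  have hle : ∀ j ∈ s, w j * a j ≤ w j * M := fun j hj =>
    mul_le_mul_of_nonneg_left (ha j hj) (hw j hj)
  have heq := (sum_eq_sum_iff_of_le hle).1 (by rw [← sum_mul, hw1, one_mul, hsum]) i hi
  exact mul_left_cancel₀ hwi.ne' heq

theorem Finset.image_foldr_comp_of_forall {α : Type*} [DecidableEq α] {p : Finset α → Prop}
    {fs : List (α → α)} (h : ∀ f ∈ fs, ∀ s, p s → p (s.image f)) {s : Finset α} (hs : p s) :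
    p (s.image (fs.foldr (· ∘ ·) id)) := by
  induction fs with
  | nil => simpa using hs
  | cons f fs ih =>
    rw [List.foldr_cons, ← image_image]
    exact h f List.mem_cons_self _ (ih fun g hg => h g (List.mem_cons_of_mem f hg))

namespace Matrix

variable {S : Type*} [Fintype S] [DecidableEq S] {Q : Matrix S S ℝ}

theorem mulVec_mono_of_mem_rowStochastic (hQ : Q ∈ rowStochastic ℝ S) {u v : S → ℝ}
    (huv : u ≤ v) : Q *ᵥ u ≤ Q *ᵥ v := fun j => by
  simpa [mulVec_sub] using
    nonneg_mulVec_of_mem_rowStochastic hQ (x := v - u) (fun i => sub_nonneg.2 (huv i)) j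

theorem abs_mulVec_le_of_mem_rowStochastic (hQ : Q ∈ rowStochastic ℝ S) (φ : S → ℝ) (x : S) :
    |(Q *ᵥ φ) x| ≤ (Q *ᵥ fun y => |φ y|) x := by
  refine (abs_sum_le_sum_abs _ _).trans_eq (sum_congr rfl fun y _ => ?_)
  rw [abs_mul, abs_of_nonneg (nonneg_of_mem_rowStochastic hQ)]

theorem pow_mulVec_le_pow_smul_of_mulVec_le (hQ : Q ∈ rowStochastic ℝ S) {v : S → ℝ}
    {r : ℝ} (hr : 0 ≤ r) (hdecay : Q *ᵥ v ≤ r • v) (q : ℕ) : Q ^ q *ᵥ v ≤ r ^ q • v := by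
  induction q with
  | zero => simp
  | succ q ih =>
    calc Q ^ (q + 1) *ᵥ v = Q ^ q *ᵥ (Q *ᵥ v) := by rw [pow_succ, mulVec_mulVec]
      _ ≤ Q ^ q *ᵥ (r • v) := mulVec_mono_of_mem_rowStochastic (pow_mem hQ q) hdecay
      _ = r • (Q ^ q *ᵥ v) := mulVec_smul _ _ _
      _ ≤ r • (r ^ q • v) := smul_le_smul_of_nonneg_left ih hr
      _ = r ^ (q + 1) • v := by rw [smul_smul, pow_succ']

theorem pow_mulVec_le_pow_div (hQ : Q ∈ rowStochastic ℝ S) {v : S → ℝ} (hv1 : v ≤ 1)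
    {m : ℕ} {r : ℝ} (hr : 0 ≤ r) (hdecay : Q ^ m *ᵥ v ≤ r • v) (t : ℕ) :
    Q ^ t *ᵥ v ≤ r ^ (t / m) • 1 := by
  calc Q ^ t *ᵥ v = Q ^ (t % m) *ᵥ ((Q ^ m) ^ (t / m) *ᵥ v) := by
        rw [mulVec_mulVec, ← pow_mul, ← pow_add, Nat.mod_add_div]
    _ ≤ Q ^ (t % m) *ᵥ (r ^ (t / m) • 1) :=
        mulVec_mono_of_mem_rowStochastic (pow_mem hQ _)
          ((pow_mulVec_le_pow_smul_of_mulVec_le (pow_mem hQ m) hr hdecay _).trans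
            (smul_le_smul_of_nonneg_left hv1 (pow_nonneg hr _)))
    _ = r ^ (t / m) • 1 := by
        rw [mulVec_smul, one_vecMul_of_mem_rowStochastic (pow_mem hQ _)]

theorem summable_pow_mulVec_of_decay (hQ : Q ∈ rowStochastic ℝ S) {T : Set S}
    {m : ℕ} (hm : 0 < m) {r : ℝ} (hr0 : 0 ≤ r) (hr1 : r < 1)
    (hdecay : Q ^ m *ᵥ T.indicator 1 ≤ r • T.indicator 1)
    {φ : S → ℝ} (hφ : ∀ y ∉ T, φ y = 0) (x : S) :
    Summable fun t => (Q ^ t *ᵥ φ) x := by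
  set B := ∑ y, |φ y|
  have hφB : (fun y => |φ y|) ≤ B • T.indicator 1 := fun y => by
    by_cases hy : y ∈ T
    · simpa [hy] using single_le_sum (f := fun z => |φ z|) (fun z _ => abs_nonneg _) (mem_univ y)
    · simp [hy, hφ y hy]
  have hv1 : T.indicator (1 : S → ℝ) ≤ 1 := Set.indicator_le_self' fun _ _ => zero_le_one
  refine (summable_pow_div_of_lt_one hr0 hr1 hm |>.mul_left B).of_norm_bounded fun t => ?_
  calc ‖(Q ^ t *ᵥ φ) x‖ ≤ (Q ^ t *ᵥ fun y => |φ y|) x :=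
        abs_mulVec_le_of_mem_rowStochastic (pow_mem hQ t) φ x
    _ ≤ (Q ^ t *ᵥ (B • T.indicator 1)) x :=
        mulVec_mono_of_mem_rowStochastic (pow_mem hQ t) hφB x
    _ = B * (Q ^ t *ᵥ T.indicator 1) x := by rw [mulVec_smul]; rfl
    _ ≤ B * r ^ (t / m) :=
        mul_le_mul_of_nonneg_left (by simpa using pow_mulVec_le_pow_div hQ hv1 hr0 hdecay t x)
          (sum_nonneg fun y _ => abs_nonneg _)

theorem tsum_pow_mulVec_eq_add {φ : S → ℝ} {x : S} (h : Summable fun t => (Q ^ t *ᵥ φ) x) :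
    ∑' t, (Q ^ t *ᵥ φ) x = φ x + ∑' t, (Q ^ t *ᵥ (Q *ᵥ φ)) x := by
  simp only [h.tsum_eq_zero_add, pow_zero, one_mulVec, mulVec_mulVec, ← pow_succ]

theorem tsum_pow_mulVec_sum {ι : Type*} (s : Finset ι) (a : ι → ℝ) {φ : ι → S → ℝ} {x : S}
    (h : ∀ k ∈ s, Summable fun t => (Q ^ t *ᵥ φ k) x) :
    ∑' t, (Q ^ t *ᵥ ∑ k ∈ s, a k • φ k) x = ∑ k ∈ s, a k * ∑' t, (Q ^ t *ᵥ φ k) x := by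
  simp only [mulVec_sum, mulVec_smul, Finset.sum_apply, Pi.smul_apply, smul_eq_mul]
  rw [Summable.tsum_finsetSum fun k hk => (h k hk).mul_left (a k)]
  exact sum_congr rfl fun k _ => tsum_mul_left

end Matrix

namespace Evo

section NeutralChain

variable {N : ℕ} {p0 : Event N → ℝ}

local notation "P" => tmat (fun _ : St N => p0)

theorem sgen_eq_tsum_mulVec (p : St N → Event N → ℝ) (ξ : St N) (φ : St N → ℝ) :
    sgen p ξ φ = ∑' t, (tmat p ^ t *ᵥ φ) ξ :=
  rfl

theorem tmat_mulVec (ψ : St N → ℝ) : P *ᵥ ψ = fun x => ∑ e, p0 e * ψ (upd e x) := by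
  ext x
  simp only [mulVec, dotProduct, tmat, of_apply, sum_mul, ite_mul, zero_mul]
  rw [sum_comm]
  simp

theorem tmat_mem_rowStochastic (hp0 : IsDist p0) : P ∈ rowStochastic ℝ (St N) := by
  refine ⟨fun x y => sum_nonneg fun e _ => ?_, ?_⟩
  · split_ifs
    exacts [hp0.1 e, le_rfl]
  · rw [tmat_mulVec]
    ext x
    simp [hp0.2]

theorem upd_of_not_transient {x : St N} (hx : ¬Transient x) (e : Event N) : upd e x = x := by
  obtain rfl | rfl : x = stA N ∨ x = stB N := by unfold Transient at hx; tauto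
  all_goals rfl

theorem not_transient_const (b : Bool) : ¬Transient (fun _ : Fin N => b) := by
  cases b
  exacts [fun h => h.2 rfl, fun h => h.1 rfl]

theorem pow_tmat_mulVec_of_not_transient (hp0 : ∑ e, p0 e = 1) {x : St N} (hx : ¬Transient x)
    (ψ : St N → ℝ) (t : ℕ) : (P ^ t *ᵥ ψ) x = ψ x := by
  induction t with
  | zero => simp
  | succ t ih =>
    rw [pow_succ', ← mulVec_mulVec, tmat_mulVec]
    simp [upd_of_not_transient hx, ih, ← sum_mul, hp0]

theorem prod_mul_le_pow_tmat_mulVec (hp0 : IsDist p0) (L : List (Event N)) {ψ : St N → ℝ}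
    (hψ : 0 ≤ ψ) (x : St N) :
    (L.map p0).prod * ψ (x ∘ (L.map extMap).foldr (· ∘ ·) id) ≤ (P ^ L.length *ᵥ ψ) x := by
  induction L generalizing x with
  | nil => simp
  | cons e L ih =>
    have hstep : p0 e * (P ^ L.length *ᵥ ψ) (upd e x) ≤ (P ^ (L.length + 1) *ᵥ ψ) x := by
      rw [pow_succ', ← mulVec_mulVec, tmat_mulVec]
      exact single_le_sum (f := fun e' => p0 e' * (P ^ L.length *ᵥ ψ) (upd e' x))
        (fun e' _ => mul_nonneg (hp0.1 e')
          (nonneg_mulVec_of_mem_rowStochastic (pow_mem (tmat_mem_rowStochastic hp0) _) hψ _))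
        (mem_univ e)
    calc ((e :: L).map p0).prod * ψ (x ∘ ((e :: L).map extMap).foldr (· ∘ ·) id)
        = p0 e * ((L.map p0).prod * ψ (upd e x ∘ (L.map extMap).foldr (· ∘ ·) id)) := by
          simp only [List.map_cons, List.prod_cons, List.foldr_cons, mul_assoc]; rfl
      _ ≤ p0 e * (P ^ L.length *ᵥ ψ) (upd e x) := mul_le_mul_of_nonneg_left (ih _) (hp0.1 e)
      _ ≤ _ := hstep

theorem exists_pow_tmat_mulVec_transient_le (hp0 : IsDist p0)
    (hfix : FixAxiom fun _ : St N => p0) :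
    ∃ m, 0 < m ∧ ∃ r : ℝ, 0 ≤ r ∧ r < 1 ∧
      P ^ m *ᵥ {x | Transient x}.indicator 1 ≤ r • {x | Transient x}.indicator 1 := by
  obtain ⟨i, m, ev, hm, hpos, -, hcomp⟩ := hfix
  have hP1 : P ^ m *ᵥ 1 = 1 :=
    one_vecMul_of_mem_rowStochastic (pow_mem (tmat_mem_rowStochastic hp0) m)
  set L := List.ofFn ev
  have hL : (L.map extMap).foldr (· ∘ ·) id = fun _ => i := by
    rw [List.map_ofFn]
    exact funext hcomp
  set c := (L.map p0).prod
  have hc0 : 0 < c := List.prod_pos fun a ha => by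
    obtain ⟨e, he, rfl⟩ := List.mem_map.1 ha
    obtain ⟨k, rfl⟩ := List.mem_ofFn.1 he
    exact hpos k (stA N)
  -- Along the fixation sequence every state reaches the monomorphic state `fun _ => x i`.
  have hlb : ∀ {ψ : St N → ℝ}, 0 ≤ ψ → ∀ x, c * ψ (fun _ => x i) ≤ (P ^ m *ᵥ ψ) x := by
    intro ψ hψ x
    have h := prod_mul_le_pow_tmat_mulVec hp0 L hψ x
    rw [hL, List.length_ofFn] at h
    exact h
  have hc1 : c ≤ 1 := by simpa [hP1] using hlb zero_le_one (stA N)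
  refine ⟨m, hm, 1 - c, by linarith, by linarith, fun x => ?_⟩
  by_cases hx : Transient x
  · have habs := hlb (ψ := {x | Transient x}ᶜ.indicator 1)
      (Set.indicator_nonneg fun _ _ => zero_le_one) x
    rw [Set.indicator_of_mem (not_transient_const (x i)), Set.indicator_compl, mulVec_sub,
      hP1] at habs
    simp only [Pi.sub_apply, Pi.one_apply, mul_one] at habs
    have hxT : x ∈ {x | Transient x} := hx
    simp only [Pi.smul_apply, smul_eq_mul, Set.indicator_of_mem hxT, Pi.one_apply, mul_one]
    linarith
  · simp [pow_tmat_mulVec_of_not_transient hp0.2 hx, hx]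

theorem summable_pow_tmat_mulVec (hp0 : IsDist p0) (hfix : FixAxiom fun _ : St N => p0)
    {φ : St N → ℝ} (hφ : ∀ y, ¬Transient y → φ y = 0) (ξ : St N) :
    Summable fun t => (P ^ t *ᵥ φ) ξ := by
  obtain ⟨m, hm, r, hr0, hr1, hdecay⟩ := exists_pow_tmat_mulVec_transient_le hp0 hfix
  exact summable_pow_mulVec_of_decay (tmat_mem_rowStochastic hp0) hm hr0 hr1 hdecay hφ ξ

end NeutralChain

section ReproductiveValue

variable {N : ℕ}

theorem sum_mul_extMap (q : Event N → ℝ) (f : Fin N → ℝ) (j : Fin N) :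
    ∑ e, q e * f (extMap e j) = (∑ e, q e) * f j + ∑ i, emarg q i j * (f i - f j) := by
  have h : ∀ e : Event N, q e * f (extMap e j)
      = q e * f j + ∑ i, (if j ∈ e.1 ∧ e.2 j = i then q e else 0) * (f i - f j) := by
    intro e
    by_cases hj : j ∈ e.1
    · simp only [extMap, hj, if_true, true_and, ite_mul, zero_mul, sum_ite_eq, mem_univ]
      ring
    · simp [extMap, hj]
  simp only [sum_congr rfl fun e _ => h e, sum_add_distrib, sum_mul, emarg]
  rw [sum_comm (s := univ (α := Event N))]

theorem sum_mul_sum_emarg_eq_zero {p0 : Event N → ℝ} {π : Fin N → ℝ} (hπ : IsRV p0 π)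
    (f : Fin N → ℝ) : ∑ j, π j * ∑ i, emarg p0 i j * (f i - f j) = 0 := by
  simp only [mul_sub, sum_sub_distrib, mul_sum]
  rw [sub_eq_zero, sum_comm]
  refine sum_congr rfl fun i _ => ?_
  have := congrArg (· * f i) (hπ.1 i)
  simp only [sum_mul] at this
  convert this using 2 <;> ring

theorem sum_mul_hatx_upd {p0 : Event N → ℝ} (hp0 : ∑ e, p0 e = 1) {π : Fin N → ℝ}
    (hπ : IsRV p0 π) (x : St N) : ∑ e, p0 e * hatx π (upd e x) = hatx π x := by
  have h := sum_mul_sum_emarg_eq_zero hπ (fun i => bv (x i))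
  simp only [hatx, upd, mul_sum]
  rw [sum_comm]
  simp only [mul_left_comm (p0 _), ← mul_sum, sum_mul_extMap p0 (fun i => bv (x i)), hp0, one_mul,
    mul_add, sum_add_distrib, h, add_zero]

end ReproductiveValue

section Observable

variable {N : ℕ}

theorem prodI_eq_ite (x : St N) (J : Finset (Fin N)) :
    prodI x J = if ∀ j ∈ J, x j = true then 1 else 0 := by
  unfold prodI bv
  convert prod_boole

theorem prodI_upd (e : Event N) (x : St N) (I : Finset (Fin N)) :
    prodI (upd e x) I = prodI x (I.image (extMap e)) := by
  simp only [prodI_eq_ite, upd, forall_mem_image]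
  congr

def hatxSubProdI (π : Fin N → ℝ) (I : Finset (Fin N)) (x : St N) : ℝ := hatx π x - prodI x I

theorem hatxSubProdI_of_not_transient {π : Fin N → ℝ} (hπ : ∑ i, π i = 1)
    {I : Finset (Fin N)} (hI : I.Nonempty) {y : St N} (hy : ¬Transient y) :
    hatxSubProdI π I y = 0 := by
  obtain rfl | rfl : y = stA N ∨ y = stB N := by unfold Transient at hy; tauto
  · simp [hatxSubProdI, hatx, prodI, stA, bv, hπ]
  · obtain ⟨j, hj⟩ := hI
    simp [hatxSubProdI, hatx, prodI, stB, bv, prod_eq_zero hj]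

theorem tmat_mulVec_hatxSubProdI {p0 : Event N → ℝ} (hp0 : ∑ e, p0 e = 1) {π : Fin N → ℝ}
    (hπ : IsRV p0 π) (I : Finset (Fin N)) :
    tmat (fun _ : St N => p0) *ᵥ hatxSubProdI π I
      = ∑ e, p0 e • hatxSubProdI π (I.image (extMap e)) := by
  ext x
  simp only [tmat_mulVec, hatxSubProdI, Finset.sum_apply, Pi.smul_apply, smul_eq_mul, mul_sub,
    sum_sub_distrib, prodI_upd, sum_mul_hatx_upd hp0 hπ, ← sum_mul, hp0, one_mul]

theorem sum_smul_hatxSubProdI_singleton {π : Fin N → ℝ} (hπ : ∑ i, π i = 1) :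
    ∑ j, π j • hatxSubProdI π {j} = 0 := by
  ext x
  simp [hatxSubProdI, prodI, mul_sub, sum_sub_distrib, ← sum_mul, hπ, hatx]

theorem etaSystem_sgen {p0 : Event N → ℝ} (hp0 : IsDist p0) (hfix : FixAxiom fun _ : St N => p0)
    {π : Fin N → ℝ} (hπ : IsRV p0 π) (ξ : St N) (D : ℕ) :
    EtaSystem p0 π (fun I => hatx π ξ - prodI ξ I) D
      (fun I => sgen (fun _ => p0) ξ (hatxSubProdI π I)) := by
  have hsum : ∀ I : Finset (Fin N), I.Nonempty →
      Summable fun t => (tmat (fun _ : St N => p0) ^ t *ᵥ hatxSubProdI π I) ξ :=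
    fun I hI => summable_pow_tmat_mulVec hp0 hfix
      (fun y hy => hatxSubProdI_of_not_transient hπ.2 hI hy) ξ
  simp only [EtaSystem, sgen_eq_tsum_mulVec]
  refine ⟨fun I hI _ => ?_, ?_⟩
  · rw [tsum_pow_mulVec_eq_add (hsum I (card_pos.1 hI)), tmat_mulVec_hatxSubProdI hp0.2 hπ,
      tsum_pow_mulVec_sum _ _ fun e _ => hsum _ ((card_pos.1 hI).image _)]
    rfl
  · rw [← tsum_pow_mulVec_sum _ _ fun j _ => hsum {j} (singleton_nonempty j),
      sum_smul_hatxSubProdI_singleton hπ.2]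
    simp

end Observable

section Uniqueness

variable {N : ℕ} {p0 : Event N → ℝ} {D : ℕ}

def IsHarmonic (p0 : Event N → ℝ) (D : ℕ) (δ : Finset (Fin N) → ℝ) : Prop :=
  ∀ I : Finset (Fin N), 1 ≤ I.card → I.card ≤ D + 1 →
    δ I = ∑ e, p0 e * δ (I.image (extMap e))

theorem IsHarmonic.neg {δ : Finset (Fin N) → ℝ} (hδ : IsHarmonic p0 D δ) :
    IsHarmonic p0 D (-δ) := fun I h1 h2 => by
  simp [hδ I h1 h2]

theorem EtaSystem.isHarmonic_sub {π : Fin N → ℝ} {E η η' : Finset (Fin N) → ℝ}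
    (h : EtaSystem p0 π E D η) (h' : EtaSystem p0 π E D η') : IsHarmonic p0 D (η - η') :=
  fun I h1 h2 => by
    simp only [Pi.sub_apply, h.1 I h1 h2, h'.1 I h1 h2, mul_sub, sum_sub_distrib]
    ring

theorem IsHarmonic.le_singleton (hp0 : IsDist p0) {i : Fin N} {m : ℕ} {ev : Fin m → Event N}
    (hpos : ∀ k, 0 < p0 (ev k))
    (hcomp : ∀ j, (List.ofFn fun k => extMap (ev k)).foldr (· ∘ ·) id j = i)
    {δ : Finset (Fin N) → ℝ} (hδ : IsHarmonic p0 D δ) {I : Finset (Fin N)}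
    (h1 : 1 ≤ I.card) (h2 : I.card ≤ D + 1) : δ I ≤ δ {i} := by
  -- A maximiser stays a maximiser under every event of positive weight, and the fixation
  -- sequence carries it to `{i}`.
  set C := univ.filter fun J : Finset (Fin N) => 1 ≤ J.card ∧ J.card ≤ D + 1
  have hC : ∀ J ∈ C, ∀ e : Event N, J.image (extMap e) ∈ C := by
    intro J hJ e
    simp only [C, mem_filter, mem_univ, true_and] at hJ ⊢
    exact ⟨(card_pos.1 hJ.1 |>.image _).card_pos, card_image_le.trans hJ.2⟩
  obtain ⟨Imax, hImax, hmax⟩ := C.exists_max_image δ ⟨{i}, by simp [C]⟩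
  have hstep : ∀ f ∈ List.ofFn fun k => extMap (ev k), ∀ J,
      J ∈ C ∧ δ J = δ Imax → J.image f ∈ C ∧ δ (J.image f) = δ Imax := by
    rintro f hf J ⟨hJ, hJmax⟩
    obtain ⟨k, rfl⟩ := List.mem_ofFn.1 hf
    obtain ⟨-, hJ1, hJ2⟩ := mem_filter.1 hJ
    exact ⟨hC J hJ _, eq_of_sum_mul_eq_of_le (fun e _ => hp0.1 e) hp0.2
      (fun e _ => hmax _ (hC J hJ e)) ((hδ J hJ1 hJ2).symm.trans hJmax) (mem_univ _) (hpos k)⟩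
  have hsingleton := image_foldr_comp_of_forall hstep ⟨hImax, rfl⟩
  rw [show (List.ofFn fun k => extMap (ev k)).foldr (· ∘ ·) id = fun _ => i from funext hcomp,
    image_const (card_pos.1 (mem_filter.1 hImax).2.1)] at hsingleton
  rw [hsingleton.2]
  exact hmax I (mem_filter.2 ⟨mem_univ _, h1, h2⟩)

theorem IsHarmonic.eq_singleton (hp0 : IsDist p0) {i : Fin N} {m : ℕ} {ev : Fin m → Event N}
    (hpos : ∀ k, 0 < p0 (ev k))
    (hcomp : ∀ j, (List.ofFn fun k => extMap (ev k)).foldr (· ∘ ·) id j = i)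
    {δ : Finset (Fin N) → ℝ} (hδ : IsHarmonic p0 D δ) {I : Finset (Fin N)}
    (h1 : 1 ≤ I.card) (h2 : I.card ≤ D + 1) : δ I = δ {i} :=
  le_antisymm (hδ.le_singleton hp0 hpos hcomp h1 h2)
    (neg_le_neg_iff.1 (hδ.neg.le_singleton hp0 hpos hcomp h1 h2))

theorem EtaSystem.eq_of_fixation (hp0 : IsDist p0) (hfix : FixAxiom fun _ : St N => p0)
    {π : Fin N → ℝ} (hπ : ∑ i, π i = 1) {E η η' : Finset (Fin N) → ℝ}
    (h : EtaSystem p0 π E D η) (h' : EtaSystem p0 π E D η') {I : Finset (Fin N)}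
    (h1 : 1 ≤ I.card) (h2 : I.card ≤ D + 1) : η I = η' I := by
  obtain ⟨i, m, ev, -, hpos, -, hcomp⟩ := hfix
  have hconst : ∀ J : Finset (Fin N), 1 ≤ J.card → J.card ≤ D + 1 → (η - η') J = (η - η') {i} :=
    fun J hJ1 hJ2 => (h.isHarmonic_sub h').eq_singleton hp0 (fun k => hpos k (stA N)) hcomp hJ1 hJ2
  have hnorm : ∑ j, π j * (η - η') {j} = 0 := by
    simp [mul_sub, sum_sub_distrib, h.2, h'.2]
  rw [sum_congr rfl fun j _ => by rw [hconst {j} (by simp) (by simp)], ← sum_mul, hπ,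
    one_mul] at hnorm
  exact sub_eq_zero.1 ((hconst I h1 h2).trans hnorm)

end Uniqueness

theorem statement6_general {N : ℕ} (p0 : Event N → ℝ) (hp0 : IsDist p0)
    (hfix : FixAxiom fun _ : St N => p0)
    (π : Fin N → ℝ) (hπ : IsRV p0 π)
    (ξ : St N) (D : ℕ) :
    EtaSystem p0 π (fun I => hatx π ξ - prodI ξ I) D
      (fun I => sgen (fun _ => p0) ξ (fun x => hatx π x - prodI x I)) ∧
    (∀ η η' : Finset (Fin N) → ℝ,
      EtaSystem p0 π (fun I => hatx π ξ - prodI ξ I) D η →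
      EtaSystem p0 π (fun I => hatx π ξ - prodI ξ I) D η' →
      ∀ I : Finset (Fin N), 1 ≤ I.card → I.card ≤ D + 1 → η I = η' I) :=
  ⟨etaSystem_sgen hp0 hfix hπ ξ D, fun _ _ h h' _ => h.eq_of_fixation hp0 hfix hπ.2 h'⟩

/-- the system `η_I = ξ̂ − ξ_I + Σ_{(R,α)} p°_{(R,α)} η_{α̃(I)}`
(for `1 ≤ |I| ≤ D+1`) with normalization `Σ_i π_i η_{{i}} = 0` is solved by
`η_I = ⟨x̂ − x_I⟩°_ξ`, and this solution is unique. -/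
theorem statement6 {N : ℕ} (p0 : Event N → ℝ) (hp0 : IsDist p0)
    (hfix : FixAxiom fun _ : St N => p0)
    (π : Fin N → ℝ) (hπ : IsRV p0 π)
    (ξ : St N) (hξ : Transient ξ) (D : ℕ) :
    EtaSystem p0 π (fun I => hatx π ξ - prodI ξ I) D
      (fun I => sgen (fun _ => p0) ξ (fun x => hatx π x - prodI x I)) ∧
    (∀ η η' : Finset (Fin N) → ℝ,
      EtaSystem p0 π (fun I => hatx π ξ - prodI ξ I) D η →
      EtaSystem p0 π (fun I => hatx π ξ - prodI ξ I) D η' →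
      ∀ I : Finset (Fin N), 1 ≤ I.card → I.card ≤ D + 1 → η I = η' I) :=
  statement6_general p0 hp0 hfix π hπ ξ D

end Evo
end
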